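/- arXiv:2508.16452 — 9 statements merged into one kernel-verified Lean document; each statement's English description precedes it below -/
import Mathlib

section
/- Let G₀ = N₀ ⋊ ℤ where ℤ acts on N₀ by shifting indices (t a_i t⁻¹ = a_{i+1}, t c_i t⁻¹ = c_i), generated by S = {t, a_0}. If g ∈ N₀ and the word norm ‖g‖_S ≤ n, then g lies in the subgroup generated by S_n = {a_i : |i| ≤ n} and ‖g‖_{S_n} ≤ n. -/
/-- Generators of Hall's group `G₀`: the shift `t`, and `a i`, `c i` for `i : ℤ`. -/
inductive Gen where
  | t : Gen
  | a : ℤ → Gen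
  | c : ℤ → Gen

/-- The commutator convention of the paper: `[x, y] = x⁻¹y⁻¹xy`. -/
def pcomm {G : Type*} [Group G] (x y : G) : G := x⁻¹ * y⁻¹ * x * y

/-- The relations of Hall's group `G₀ = N₀ ⋊ ℤ`: `t (a i) t⁻¹ = a (i+1)`,
`t (c i) t⁻¹ = c i`, `[a i, a j] = c (i - j)`, and the `c i` are central in `N₀`. -/
def rels : Set (FreeGroup Gen) :=
  (Set.range fun i : ℤ =>
    FreeGroup.of Gen.t * FreeGroup.of (Gen.a i) * (FreeGroup.of Gen.t)⁻¹ *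
      (FreeGroup.of (Gen.a (i + 1)))⁻¹) ∪
  (Set.range fun i : ℤ =>
    FreeGroup.of Gen.t * FreeGroup.of (Gen.c i) * (FreeGroup.of Gen.t)⁻¹ *
      (FreeGroup.of (Gen.c i))⁻¹) ∪
  (Set.range fun p : ℤ × ℤ =>
    pcomm (FreeGroup.of (Gen.a p.1)) (FreeGroup.of (Gen.a p.2)) *
      (FreeGroup.of (Gen.c (p.1 - p.2)))⁻¹) ∪
  (Set.range fun p : ℤ × ℤ =>
    pcomm (FreeGroup.of (Gen.c p.1)) (FreeGroup.of (Gen.a p.2))) ∪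
  (Set.range fun p : ℤ × ℤ =>
    pcomm (FreeGroup.of (Gen.c p.1)) (FreeGroup.of (Gen.c p.2)))

/-- Hall's group `G₀`. -/
abbrev G₀ := PresentedGroup rels

/-- The image of `t` in `G₀`. -/
def tElt : G₀ := PresentedGroup.of Gen.t
/-- The image of `a i` in `G₀`. -/
def aElt (i : ℤ) : G₀ := PresentedGroup.of (Gen.a i)
/-- The image of `c i` in `G₀`. -/
def cElt (i : ℤ) : G₀ := PresentedGroup.of (Gen.c i)

/-!
Write `aᵢ = tⁱ a₀ t⁻ⁱ`. Pushing every `t^{±1}` of a word of length `ℓ` in `t, a₀` to the right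
turns it into a product of at most `ℓ - |k|` letters `aᵢ^{±1}` with `|i| ≤ ℓ`, followed by `tᵏ`,
where `k` is the exponent sum of `t`. On `N₀` this exponent sum vanishes, so `tᵏ = 1`.
-/

section PushShiftRight

variable {G : Type*} [Group G] (t a : G)

theorem exists_prod_conj_mul_zpow (L : List G)
    (hL : ∀ x ∈ L, x = t ∨ x = t⁻¹ ∨ x = a ∨ x = a⁻¹) :
    ∃ (k : ℤ) (M : List G), M.length + k.natAbs ≤ L.length ∧
      (∀ x ∈ M, ∃ i : ℤ, |i| ≤ L.length ∧
        (x = t ^ i * a * t ^ (-i) ∨ x = (t ^ i * a * t ^ (-i))⁻¹)) ∧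
      L.prod = M.prod * t ^ k := by
  induction L using List.reverseRecOn with
  | nil => exact ⟨0, [], by simp, by simp, by simp⟩
  | append_singleton L x ih =>
    obtain ⟨k, M, hlen, hM, hprod⟩ := ih fun y hy => hL y (by simp [hy])
    have hM' : ∀ y ∈ M, ∃ i : ℤ, |i| ≤ (L.length + 1 : ℕ) ∧
        (y = t ^ i * a * t ^ (-i) ∨ y = (t ^ i * a * t ^ (-i))⁻¹) := fun y hy =>
      (hM y hy).imp fun i hi => ⟨by omega, hi.2⟩
    have hk : |k| ≤ (L.length + 1 : ℕ) := by rw [abs_le]; omega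
    simp only [List.length_append, List.length_singleton, List.prod_append, List.prod_singleton,
      hprod]
    rcases hL x (by simp) with hx | hx | hx | hx <;> subst x
    · exact ⟨k + 1, M, by omega, hM', by rw [mul_assoc, ← zpow_add_one]⟩
    · exact ⟨k - 1, M, by omega, hM', by rw [mul_assoc, ← zpow_sub_one]⟩
    · refine ⟨k, M ++ [t ^ k * a * t ^ (-k)], ?_, ?_, ?_⟩
      · simp only [List.length_append, List.length_singleton]; omega
      · exact List.forall_mem_append.2 ⟨hM', List.forall_mem_singleton.2 ⟨k, hk, .inl rfl⟩⟩
      · simp only [List.prod_append, List.prod_singleton]; group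
    · refine ⟨k, M ++ [(t ^ k * a * t ^ (-k))⁻¹], ?_, ?_, ?_⟩
      · simp only [List.length_append, List.length_singleton]; omega
      · exact List.forall_mem_append.2 ⟨hM', List.forall_mem_singleton.2 ⟨k, hk, .inr rfl⟩⟩
      · simp only [List.prod_append, List.prod_singleton]; group

end PushShiftRight

theorem tElt_mul_aElt (i : ℤ) : tElt * aElt i = aElt (i + 1) * tElt := by
  have h : tElt * aElt i * tElt⁻¹ = aElt (i + 1) :=
    PresentedGroup.mk_eq_mk_of_mul_inv_mem (Or.inl (Or.inl (Or.inl (Or.inl ⟨i, rfl⟩))))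
  rw [← h, inv_mul_cancel_right]

theorem zpow_tElt_mul_aElt (k i : ℤ) : tElt ^ k * aElt i = aElt (i + k) * tElt ^ k := by
  induction k using Int.induction_on generalizing i with
  | zero => simp
  | succ m ih =>
    rw [zpow_add_one, mul_assoc, tElt_mul_aElt, ← mul_assoc, ih, mul_assoc, add_right_comm,
      add_assoc]
  | pred m ih =>
    have h : tElt⁻¹ * aElt i = aElt (i - 1) * tElt⁻¹ := by
      rw [inv_mul_eq_iff_eq_mul, ← mul_assoc, tElt_mul_aElt, sub_add_cancel,
        mul_inv_cancel_right]
    rw [zpow_sub_one, mul_assoc, h, ← mul_assoc, ih, mul_assoc, sub_add_eq_add_sub,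
      add_sub_assoc]

theorem aElt_eq_conj (i : ℤ) : aElt i = tElt ^ i * aElt 0 * tElt ^ (-i) := by
  rw [zpow_tElt_mul_aElt, zero_add, zpow_neg, mul_inv_cancel_right]

/-- The exponent sum of `t`, i.e. the projection `G₀ = N₀ ⋊ ℤ → ℤ`. -/
noncomputable def tExponent : G₀ →* Multiplicative ℤ :=
  PresentedGroup.toGroup (f := fun | .t => .ofAdd 1 | .a _ => 1 | .c _ => 1) <| by
    rintro r ((((⟨i, rfl⟩ | ⟨i, rfl⟩) | ⟨p, rfl⟩) | ⟨p, rfl⟩) | ⟨p, rfl⟩) <;> simp [pcomm]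

theorem tExponent_zpow_tElt (k : ℤ) : tExponent (tElt ^ k) = .ofAdd k := by
  simp [tExponent, tElt, PresentedGroup.toGroup.of, ← ofAdd_zsmul]

theorem closure_aElt_cElt_le_ker_tExponent :
    Subgroup.closure {x : G₀ | ∃ i : ℤ, x = aElt i ∨ x = cElt i} ≤ tExponent.ker := by
  rw [Subgroup.closure_le]
  rintro x ⟨i, rfl | rfl⟩ <;> simp [tExponent, aElt, cElt, PresentedGroup.toGroup.of]

/-- If `g` lies in `N₀ ≤ G₀` and has word norm at most `n` with respect
to `S = {t, a 0}`, then `g` lies in the subgroup generated by `S_n = {a i : |i| ≤ n}` and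
has word norm at most `n` with respect to `S_n`. -/
theorem stmt_1 (n : ℕ) (g : G₀)
    (hgN : g ∈ Subgroup.closure {x : G₀ | ∃ i : ℤ, x = aElt i ∨ x = cElt i})
    (hnorm : ∃ L : List G₀, L.length ≤ n ∧
      (∀ x ∈ L, x = tElt ∨ x = tElt⁻¹ ∨ x = aElt 0 ∨ x = (aElt 0)⁻¹) ∧ L.prod = g) :
    g ∈ Subgroup.closure {x : G₀ | ∃ i : ℤ, |i| ≤ (n : ℤ) ∧ x = aElt i} ∧
    ∃ L : List G₀, L.length ≤ n ∧
      (∀ x ∈ L, ∃ i : ℤ, |i| ≤ (n : ℤ) ∧ (x = aElt i ∨ x = (aElt i)⁻¹)) ∧ L.prod = g := by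
  obtain ⟨L, hLn, hLS, rfl⟩ := hnorm
  obtain ⟨k, M, hlen, hM, hprod⟩ := exists_prod_conj_mul_zpow tElt (aElt 0) L hLS
  simp only [← aElt_eq_conj] at hM
  have hMS : ∀ x ∈ M, ∃ i : ℤ, |i| ≤ (n : ℤ) ∧ (x = aElt i ∨ x = (aElt i)⁻¹) := fun x hx =>
    (hM x hx).imp fun i hi => ⟨hi.1.trans (by exact_mod_cast hLn), hi.2⟩
  have hM_mem : M.prod ∈ Subgroup.closure {x : G₀ | ∃ i : ℤ, |i| ≤ (n : ℤ) ∧ x = aElt i} := by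
    refine list_prod_mem fun x hx => ?_
    obtain ⟨i, hi, rfl | rfl⟩ := hMS x hx
    · exact Subgroup.subset_closure ⟨i, hi, rfl⟩
    · exact Subgroup.inv_mem _ (Subgroup.subset_closure ⟨i, hi, rfl⟩)
  have hk : k = 0 := by
    have hker := closure_aElt_cElt_le_ker_tExponent
    have hM_ker : M.prod ∈ tExponent.ker := by
      refine hker (Subgroup.closure_mono ?_ hM_mem)
      exact fun _ ⟨i, _, hx⟩ => ⟨i, .inl hx⟩
    have hL_ker := hker hgN
    rw [hprod, MonoidHom.mem_ker, map_mul, hM_ker, one_mul, tExponent_zpow_tElt] at hL_ker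
    exact ofAdd_eq_one.1 hL_ker
  rw [hprod, hk, zpow_zero, mul_one]
  exact ⟨hM_mem, M, by omega, hMS, rfl⟩
end

section
/- Let g = (h, n) ∈ ℤ ≀ (ℤ/Iℤ) = (⊕_{ℤ/Iℤ} ℤ) ⋊ ℤ/Iℤ. The centralizer Z(g) is generated by the set P_n = {a_i a_{i+n} a_{i+2n} ⋯ a_{i-n} : i ∈ ℤ/Iℤ} together with a single element g' = (h', n') where n' divides n in ℤ/Iℤ (i.e., i·n' = n for some i ∈ ℤ) and (g')^i g⁻¹ ∈ ⟨P_{n'}⟩. -/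
/-- The base group `⊕_{ℤ/Iℤ} ℤ` of `ℤ ≀ (ℤ/Iℤ)`, written multiplicatively. -/
abbrev Base (I : ℕ) := Multiplicative (ZMod I →₀ ℤ)

/-- The shift automorphism of the base group. -/
def shiftEquiv (I : ℕ) (k : ZMod I) : (ZMod I →₀ ℤ) ≃+ (ZMod I →₀ ℤ) :=
  Finsupp.domCongr (Equiv.addRight k)

/-- The shift action of `ℤ/Iℤ` on the base group. -/
noncomputable def shiftHom (I : ℕ) : Multiplicative (ZMod I) →* MulAut (Base I) :=
  MonoidHom.mk' (fun k => AddEquiv.toMultiplicative (shiftEquiv I k.toAdd)) (by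
    intro x y
    apply MulEquiv.ext
    intro fm
    apply Multiplicative.toAdd.injective
    ext b
    simp [shiftEquiv, Finsupp.domCongr_apply, Finsupp.equivMapDomain_apply,
      Equiv.Perm.mul_def, sub_sub]
    ring_nf)

/-- The wreath product `ℤ ≀ (ℤ/Iℤ) = (⊕_{ℤ/Iℤ} ℤ) ⋊ ℤ/Iℤ`. -/
abbrev W (I : ℕ) := SemidirectProduct (Base I) (Multiplicative (ZMod I)) (shiftHom I)

/-- The base element `a i * a (i+n) * a (i+2n) * ⋯ * a (i-n)`: the indicator (in
`⊕_{ℤ/Iℤ} ℤ`) of the coset `i + ⟨n⟩`. -/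
noncomputable def pElt (I : ℕ) [NeZero I] (i n : ZMod I) : ZMod I →₀ ℤ := by
  classical
  exact ∑ j ∈ Finset.univ.filter (fun j => j ∈ AddSubgroup.zmultiples n),
    Finsupp.single (i + j) 1

/-- The set `P n` of products of base generators along the cosets of `⟨n⟩`. -/
noncomputable def PGenSet (I : ℕ) [NeZero I] (n : ZMod I) : Set (W I) :=
  Set.range fun i : ZMod I => SemidirectProduct.inl (Multiplicative.ofAdd (pElt I i n))

/-! The centralizer of `g = (h, n)` maps onto a subgroup of the cyclic group `ℤ/Iℤ`, which is
generated by the image `n'` of some `g'` in the centralizer. Dividing an element of the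
centralizer by a suitable power of `g'` leaves a base element `f` commuting with `g`, i.e. an
`n`-periodic function on `ℤ/Iℤ`; such an `f` is `∑ f(c) · 1_{c + ⟨n⟩}` over coset
representatives `c`, hence lies in `⟨P n⟩`. Applied to `g'^i g⁻¹`, which commutes with `g'`,
the same argument gives `g'^i g⁻¹ ∈ ⟨P n'⟩`. -/

namespace SemidirectProduct

theorem commute_inl_iff {N G : Type*} [CommGroup N] [Group G] {φ : G →* MulAut N} (a : N)
    (x : N ⋊[φ] G) : Commute (inl a) x ↔ φ x.right a = a := by
  rw [Commute, SemiconjBy, SemidirectProduct.ext_iff]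
  simp [mul_comm a, eq_comm]

@[simp]
theorem right_zpow {N G : Type*} [Group N] [Group G] {φ : G →* MulAut N} (x : N ⋊[φ] G)
    (k : ℤ) : (x ^ k).right = x.right ^ k :=
  map_zpow rightHom x k

end SemidirectProduct

open SemidirectProduct

variable {I : ℕ}

theorem shiftEquiv_apply (k : ZMod I) (f : ZMod I →₀ ℤ) (b : ZMod I) :
    shiftEquiv I k f b = f (b - k) := by
  simp [shiftEquiv, Finsupp.domCongr_apply, Finsupp.equivMapDomain_apply, sub_eq_add_neg]

theorem shiftHom_eq_self_iff (k : Multiplicative (ZMod I)) (a : Base I) :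
    shiftHom I k a = a ↔ Function.Periodic a.toAdd k.toAdd := by
  change Multiplicative.ofAdd (shiftEquiv I k.toAdd a.toAdd) = a ↔ _
  rw [← Multiplicative.toAdd.injective.eq_iff, toAdd_ofAdd, Finsupp.ext_iff]
  simp only [shiftEquiv_apply]
  exact ⟨fun h x => by simpa using (h (x + k.toAdd)).symm,
    fun h x => by simpa using (h (x - k.toAdd)).symm⟩

variable [NeZero I]

theorem pElt_apply (i n b : ZMod I) :
    pElt I i n b = if (b : ZMod I ⧸ AddSubgroup.zmultiples n) = i then 1 else 0 := by
  classical
  simp only [pElt, Finsupp.finsetSum_apply, Finsupp.single_apply, QuotientAddGroup.eq,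
    ← eq_sub_iff_add_eq', Finset.sum_ite_eq', Finset.mem_filter, Finset.mem_univ, true_and,
    neg_add_eq_sub, AddSubgroup.sub_mem_comm_iff]

theorem periodic_pElt (i n : ZMod I) : Function.Periodic (pElt I i n) n := by
  intro x
  simp only [pElt_apply, QuotientAddGroup.mk_add_of_mem x (AddSubgroup.mem_zmultiples n)]

theorem eq_sum_pElt_of_periodic {n : ZMod I} {f : ZMod I →₀ ℤ} (hf : Function.Periodic f n) :
    f = ∑ c : ZMod I ⧸ AddSubgroup.zmultiples n, f c.out • pElt I c.out n := by
  ext x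
  simp only [Finsupp.finsetSum_apply, Finsupp.smul_apply, pElt_apply, QuotientAddGroup.out_eq',
    smul_eq_mul, mul_ite, mul_one, mul_zero, Finset.sum_ite_eq, Finset.mem_univ, if_true]
  rw [← hf.lift_coe, ← hf.lift_coe, QuotientAddGroup.out_eq']

theorem mem_closure_pElt_of_periodic {n : ZMod I} {f : ZMod I →₀ ℤ}
    (hf : Function.Periodic f n) : f ∈ AddSubgroup.closure (Set.range fun i => pElt I i n) := by
  rw [eq_sum_pElt_of_periodic hf]
  exact AddSubgroup.sum_mem _ fun c _ =>
    AddSubgroup.zsmul_mem _ (AddSubgroup.subset_closure (Set.mem_range_self c.out)) _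

theorem closure_PGenSet (n : ZMod I) :
    Subgroup.closure (PGenSet I n) =
      (AddSubgroup.closure (Set.range fun i => pElt I i n)).toSubgroup.map inl := by
  rw [AddSubgroup.toSubgroup_closure, MonoidHom.map_closure, PGenSet]
  congr 1
  ext x
  simp

theorem commute_of_mem_PGenSet {x g : W I} (hx : x ∈ PGenSet I g.right.toAdd) :
    Commute x g := by
  obtain ⟨i, rfl⟩ := hx
  rw [commute_inl_iff, shiftHom_eq_self_iff]
  exact periodic_pElt i _

theorem mem_closure_PGenSet_of_commute {x g : W I} (hx : x.right = 1) (hxg : Commute x g) :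
    x ∈ Subgroup.closure (PGenSet I g.right.toAdd) := by
  obtain ⟨a, rfl⟩ : x ∈ (inl : Base I →* W I).range := by
    rw [range_inl_eq_ker_rightHom]
    exact hx
  rw [commute_inl_iff, shiftHom_eq_self_iff] at hxg
  rw [closure_PGenSet]
  exact Subgroup.mem_map_of_mem _ (mem_closure_pElt_of_periodic hxg)

/-- For `g = (h, n) ∈ ℤ ≀ (ℤ/Iℤ)`, the centralizer of `g` is generated
by `P n` together with one element `g' = (h', n')`, where `i·n' = n` for some `i : ℤ` and
`(g')^i * g⁻¹ ∈ ⟨P n'⟩`. -/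
theorem stmt_4 (I : ℕ) [NeZero I] (g : W I) :
    ∃ g' : W I, ∃ i : ℤ,
      (i : ZMod I) * (Multiplicative.toAdd g'.right) = Multiplicative.toAdd g.right ∧
      g' ^ i * g⁻¹ ∈ Subgroup.closure (PGenSet I (Multiplicative.toAdd g'.right)) ∧
      Subgroup.centralizer {g} =
        Subgroup.closure (PGenSet I (Multiplicative.toAdd g.right) ∪ {g'}) := by
  obtain ⟨⟨_, g', hg'_mem, rfl⟩, hgen⟩ :=
    IsCyclic.exists_generator (α := (Subgroup.centralizer {g}).map (rightHom : W I →* _))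
  have hg'g : Commute g' g := Subgroup.mem_centralizer_singleton_iff.mp hg'_mem
  have right_mem_zpowers :
      ∀ y ∈ Subgroup.centralizer {g}, ∃ k : ℤ, g'.right ^ k = y.right := by
    intro y hy
    obtain ⟨k, hk⟩ := Subgroup.mem_zpowers_iff.mp (hgen ⟨_, Subgroup.mem_map_of_mem _ hy⟩)
    exact ⟨k, congrArg Subtype.val hk⟩
  obtain ⟨i, hi⟩ := right_mem_zpowers g (Subgroup.mem_centralizer_singleton_iff.mpr rfl)
  refine ⟨g', i, ?_, ?_, ?_⟩
  · rw [← hi, toAdd_zpow, zsmul_eq_mul]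
  · exact mem_closure_PGenSet_of_commute (by simp [hi])
      (((Commute.refl g').zpow_left i).mul_left hg'g.symm.inv_left)
  · refine le_antisymm (fun y hy => ?_) ((Subgroup.closure_le _).mpr
      (Set.union_subset (fun y hy => ?_) (Set.singleton_subset_iff.mpr hg'_mem)))
    · obtain ⟨k, hk⟩ := right_mem_zpowers y hy
      have hyg : Commute y g := Subgroup.mem_centralizer_singleton_iff.mp hy
      have hyk : y * (g' ^ k)⁻¹ ∈ Subgroup.closure (PGenSet I g.right.toAdd) :=
        mem_closure_PGenSet_of_commute (by simp [← hk]) (hyg.mul_left (hg'g.zpow_left k).inv_left)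
      rw [← inv_mul_cancel_right y (g' ^ k)]
      exact mul_mem (Subgroup.closure_mono Set.subset_union_left hyk)
        (zpow_mem (Subgroup.subset_closure (Set.mem_union_right _ (Set.mem_singleton g'))) k)
    · exact Subgroup.mem_centralizer_singleton_iff.mpr (commute_of_mem_PGenSet hy)
end

section
/- Let 𝔣 : ℝ → ℝ be a monotone increasing function satisfying 𝔣^n = exp (n-fold composition) for some n > 1. Then for every polynomial p there exists x₀ such that 𝔣(x) > p(x) for all x ≥ x₀, and for every ε > 0 there exists x₀ such that 𝔣^{n-1}(x) < e^{x^ε} for all x ≥ x₀. -/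
open Function Set

/-- Tower function: `tower k` is the `k`-fold exponential of 1. -/
noncomputable def stmt12Tower : ℕ → ℝ
  | 0 => 1
  | k + 1 => Real.exp (stmt12Tower k)

lemma stmt12Tower_ge_one : ∀ k, 1 ≤ stmt12Tower k := by
  intro k
  induction k with
  | zero => simp [stmt12Tower]
  | succ k ih =>
    have := Real.add_one_le_exp (stmt12Tower k)
    simp only [stmt12Tower]
    linarith

lemma stmt12Tower_ge (k : ℕ) : (k : ℝ) ≤ stmt12Tower k := by
  induction k with
  | zero => simp [stmt12Tower]
  | succ k ih =>
    have := Real.add_one_le_exp (stmt12Tower k)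
    simp only [stmt12Tower]
    push_cast
    linarith

/-- Key gap lemma: a function which is positive on `[1, ∞)`, continuous on `[1, e]`,
and satisfies `D (exp t) ≥ exp t * D t` tends to infinity in the eventual sense. -/
lemma stmt12_gap (D : ℝ → ℝ) (hc : ContinuousOn D (Set.Icc 1 (Real.exp 1)))
    (hpos : ∀ x, 1 ≤ x → 0 < D x)
    (hrec : ∀ t, 1 ≤ t → Real.exp t * D t ≤ D (Real.exp t)) :
    ∀ C : ℝ, ∃ X : ℝ, ∀ x ≥ X, C ≤ D x := by
  intro C
  have h1e : (1 : ℝ) ≤ Real.exp 1 := by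
    have := Real.add_one_le_exp (1 : ℝ); linarith
  have hne : (Set.Icc (1:ℝ) (Real.exp 1)).Nonempty := ⟨1, le_refl _, h1e⟩
  obtain ⟨z, hz, hmin⟩ := isCompact_Icc.exists_isMinOn hne hc
  set δ := D z with hδdef
  have hδ : 0 < δ := hpos z hz.1
  -- interval claim
  have P : ∀ k : ℕ, ∀ x : ℝ, stmt12Tower k ≤ x → x ≤ stmt12Tower (k+1) →
      δ * Real.exp k ≤ D x := by
    intro k
    induction k with
    | zero =>
      intro x hx1 hx2
      simp only [stmt12Tower] at hx1 hx2
      have := hmin ⟨hx1, hx2⟩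
      simpa using this
    | succ k ih =>
      intro x hx1 hx2
      have htk1 : (1:ℝ) ≤ stmt12Tower k := stmt12Tower_ge_one k
      have hx0 : 0 < x := lt_of_lt_of_le (Real.exp_pos _) hx1
      set t := Real.log x with ht
      have ht1 : stmt12Tower k ≤ t := by
        rw [ht, Real.le_log_iff_exp_le hx0]
        exact hx1
      have ht2 : t ≤ stmt12Tower (k+1) := by
        have : Real.exp t ≤ Real.exp (stmt12Tower (k+1)) := by
          rw [ht, Real.exp_log hx0]
          exact hx2
        exact Real.exp_le_exp.mp this
      have hxt : Real.exp t = x := Real.exp_log hx0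
      have h1 : Real.exp t * D t ≤ D x := by
        rw [← hxt]; exact hrec t (le_trans htk1 ht1)
      have h2 : δ * Real.exp k ≤ D t := ih t ht1 ht2
      have h3 : Real.exp 1 ≤ Real.exp t := Real.exp_le_exp.mpr (le_trans htk1 ht1)
      have h4 : Real.exp ((k:ℝ)+1) = Real.exp 1 * Real.exp k := by
        rw [← Real.exp_add]; ring_nf
      have h5 : Real.exp 1 * (δ * Real.exp k) ≤ Real.exp t * D t :=
        mul_le_mul h3 h2 (by positivity) (le_trans (le_trans one_pos.le h1e) h3)
      push_cast
      calc δ * Real.exp ((k:ℝ)+1) = Real.exp 1 * (δ * Real.exp k) := by rw [h4]; ring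
        _ ≤ Real.exp t * D t := h5
        _ ≤ D x := h1
  -- choose K with C ≤ δ * exp K
  obtain ⟨K, hK⟩ := exists_nat_ge (C / δ)
  have hCK : C ≤ δ * Real.exp K := by
    have h1 : C ≤ δ * K := by
      rw [div_le_iff₀ hδ] at hK; linarith [hK]
    have h2 : (K:ℝ) ≤ Real.exp K := by
      have := Real.add_one_le_exp (K:ℝ); linarith
    nlinarith
  -- extend over unions of intervals
  have R : ∀ k : ℕ, K ≤ k → ∀ x : ℝ, stmt12Tower k ≤ x → x ≤ stmt12Tower (k+1) →
      C ≤ D x := by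
    intro k hk x hx1 hx2
    have : δ * Real.exp K ≤ δ * Real.exp k := by
      have : Real.exp (K:ℝ) ≤ Real.exp (k:ℝ) :=
        Real.exp_le_exp.mpr (by exact_mod_cast hk)
      nlinarith
    exact le_trans (le_trans hCK this) (P k x hx1 hx2)
  have Q : ∀ j : ℕ, ∀ x : ℝ, stmt12Tower K ≤ x → x ≤ stmt12Tower (K + j) → C ≤ D x := by
    intro j
    induction j with
    | zero =>
      intro x hx1 hx2
      have hle : stmt12Tower K ≤ stmt12Tower (K + 1) := by
        have := Real.add_one_le_exp (stmt12Tower K)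
        simp only [stmt12Tower]; linarith
      exact R K le_rfl x hx1 (by simpa using le_trans hx2 hle)
    | succ j ih =>
      intro x hx1 hx2
      rcases le_or_gt x (stmt12Tower (K + j)) with h | h
      · exact ih x hx1 h
      · exact R (K + j) (Nat.le_add_right K j) x h.le
          (by rw [show K + (j+1) = (K + j) + 1 by omega] at hx2; exact hx2)
  refine ⟨stmt12Tower K, fun x hx => ?_⟩
  obtain ⟨j, hj⟩ := exists_nat_ge x
  refine Q j x hx (le_trans hj ?_)
  calc (j:ℝ) ≤ (K + j : ℕ) := by push_cast; linarith [Nat.cast_nonneg (α := ℝ) K]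
    _ ≤ stmt12Tower (K + j) := stmt12Tower_ge _

/-- A monotone compositional `n`-th root of `exp` (for `n > 1`)
eventually outgrows every polynomial, while its `(n-1)`-fold iterate is eventually
smaller than `exp (x^ε)` for every `ε > 0`. -/
theorem stmt_12 (f : ℝ → ℝ) (hf : Monotone f) (n : ℕ) (hn : 1 < n)
    (hroot : f^[n] = Real.exp) :
    (∀ p : Polynomial ℝ, ∃ x₀ : ℝ, ∀ x ≥ x₀, Polynomial.eval x p < f x) ∧
    (∀ ε : ℝ, 0 < ε → ∃ x₀ : ℝ, ∀ x ≥ x₀, f^[n - 1] x < Real.exp (x ^ ε)) := by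
  -- basic structural facts
  have hinj : Function.Injective f := by
    intro a b hab
    have h1 : f^[n] a = f^[n] b := by
      obtain ⟨m, rfl⟩ : ∃ m, n = m + 1 := ⟨n - 1, by omega⟩
      rw [Function.iterate_succ_apply, Function.iterate_succ_apply, hab]
    rw [hroot] at h1
    exact Real.exp_injective h1
  have hstrict : StrictMono f := hf.strictMono_of_injective hinj
  have hid : ∀ x, x < f x := by
    intro x
    by_contra h
    push_neg at h
    have hiter : ∀ k, f^[k] x ≤ x := by
      intro k
      induction k with
      | zero => simp
      | succ k ih =>
        rw [Function.iterate_succ_apply]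
        calc f^[k] (f x) ≤ f^[k] x := hf.iterate k h
          _ ≤ x := ih
    have h2 := hiter n
    rw [hroot] at h2
    have := Real.add_one_le_exp x
    linarith
  have hiter_ge : ∀ k x, x ≤ f^[k] x := by
    intro k
    induction k with
    | zero => intro x; simp
    | succ k ih =>
      intro x
      rw [Function.iterate_succ_apply']
      exact le_trans (ih x) (hid _).le
  have hcomm : ∀ x, f (Real.exp x) = Real.exp (f x) := by
    intro x
    rw [← hroot]
    calc f (f^[n] x) = f^[n+1] x := (Function.iterate_succ_apply' f n x).symm
      _ = f^[n] (f x) := Function.iterate_succ_apply f n x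
  set g := f^[n-1] with hg
  have hfg : ∀ x, f (g x) = Real.exp x := by
    intro x
    have h := Function.iterate_succ_apply' f (n-1) x
    rw [Nat.succ_eq_add_one, show n - 1 + 1 = n by omega, hroot] at h
    rw [hg, ← h]
  have hcommg : ∀ x, g (Real.exp x) = Real.exp (g x) := by
    intro x
    rw [← hroot, hg]
    calc f^[n-1] (f^[n] x) = f^[(n-1) + n] x := (Function.iterate_add_apply f (n-1) n x).symm
      _ = f^[n + (n-1)] x := by rw [Nat.add_comm]
      _ = f^[n] (f^[n-1] x) := Function.iterate_add_apply f n (n-1) x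
  have hglt : ∀ x, g x < Real.exp x := by
    intro x
    calc g x < f (g x) := hid _
      _ = Real.exp x := hfg x
  have hgge : ∀ x, x ≤ g x := fun x => hiter_ge (n-1) x
  -- surjectivity onto positives and continuity
  have hsurj : ∀ y : ℝ, 0 < y → ∃ c, f c = y := by
    intro y hy
    exact ⟨g (Real.log y), by rw [hfg, Real.exp_log hy]⟩
  have hcont : ∀ a : ℝ, 0 < a → ContinuousAt f a := by
    intro a ha
    have hfa : 0 < f a := lt_trans ha (hid a)
    apply StrictMonoOn.continuousAt_of_exists_between (s := Set.univ)
      (fun x _ y _ hxy => hstrict hxy) Filter.univ_mem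
    · intro b hb
      have hy : 0 < max b (f a / 2) := lt_max_of_lt_right (by linarith)
      obtain ⟨c, hc⟩ := hsurj _ hy
      exact ⟨c, trivial, by rw [hc]; exact le_max_left _ _,
        by rw [hc]; exact max_lt hb (by linarith)⟩
    · intro b hb
      obtain ⟨c, hc⟩ := hsurj b (lt_trans hfa hb)
      exact ⟨c, trivial, by rw [hc]; exact hb, by rw [hc]⟩
  have hcontg : ∀ a : ℝ, 0 < a → ContinuousAt g a := by
    rw [hg]
    intro a ha
    clear hg hfg hcommg hglt hgge
    induction (n - 1) with
    | zero => simpa using continuousAt_id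
    | succ k ih =>
      rw [Function.iterate_succ']
      exact ContinuousAt.comp (hcont _ (lt_of_lt_of_le ha (hiter_ge k a))) ih
  -- the two gap statements
  have gapF : ∀ C : ℝ, ∃ X : ℝ, ∀ x ≥ X, C ≤ f x - x := by
    apply stmt12_gap
    · intro x hx
      have hx0 : (0:ℝ) < x := lt_of_lt_of_le one_pos hx.1
      exact ((hcont x hx0).continuousWithinAt).sub continuousWithinAt_id
    · intro x hx; linarith [hid x]
    · intro t ht
      have h1 : Real.exp (f t) = Real.exp t * Real.exp (f t - t) := by
        rw [← Real.exp_add]; ring_nf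
      have h2 := Real.add_one_le_exp (f t - t)
      have h3 := Real.exp_pos t
      rw [hcomm t, h1]
      nlinarith
  have gapG : ∀ C : ℝ, ∃ X : ℝ, ∀ x ≥ X, C ≤ Real.exp x - g x := by
    apply stmt12_gap
    · intro x hx
      have hx0 : (0:ℝ) < x := lt_of_lt_of_le one_pos hx.1
      exact (Real.continuous_exp.continuousWithinAt).sub
        ((hcontg x hx0).continuousWithinAt)
    · intro x hx; linarith [hglt x]
    · intro t ht
      rw [hcommg t]
      have h1 : Real.exp (Real.exp t) = Real.exp (g t) * Real.exp (Real.exp t - g t) := by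
        rw [← Real.exp_add]; ring_nf
      have h2 := Real.add_one_le_exp (Real.exp t - g t)
      have h3 : Real.exp t ≤ Real.exp (g t) := Real.exp_le_exp.mpr (hgge t)
      have h4 := Real.exp_pos t
      have h5 : 0 < Real.exp t - g t := sub_pos.mpr (hglt t)
      rw [h1]
      nlinarith
  constructor
  · -- polynomial part
    intro p
    set d := p.natDegree with hd
    obtain ⟨X₁, hX₁⟩ := gapF (Real.log (d + 2 : ℝ))
    have hM0 : (0:ℝ) < (d:ℝ) + 2 := by positivity
    have L1 : ∀ y : ℝ, Real.exp X₁ ≤ y → ((d:ℝ) + 2) * y ≤ f y := by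
      intro y hy
      have hy0 : 0 < y := lt_of_lt_of_le (Real.exp_pos _) hy
      have ht : X₁ ≤ Real.log y := (Real.le_log_iff_exp_le hy0).mpr hy
      have h1 := hX₁ _ ht
      have h2 : f y = Real.exp (f (Real.log y)) := by
        rw [← hcomm, Real.exp_log hy0]
      rw [h2]
      calc ((d:ℝ) + 2) * y = Real.exp (Real.log ((d:ℝ)+2) + Real.log y) := by
            rw [Real.exp_add, Real.exp_log hM0, Real.exp_log hy0]
        _ ≤ Real.exp (f (Real.log y)) := by
            apply Real.exp_le_exp.mpr
            push_cast at h1 ⊢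
            linarith
    have L2 : ∀ z : ℝ, Real.exp (Real.exp X₁) ≤ z → z ^ (d + 2) ≤ f z := by
      intro z hz
      have hz0 : 0 < z := lt_of_lt_of_le (Real.exp_pos _) hz
      have ht : Real.exp X₁ ≤ Real.log z := (Real.le_log_iff_exp_le hz0).mpr hz
      have h1 := L1 _ ht
      have h2 : f z = Real.exp (f (Real.log z)) := by
        rw [← hcomm, Real.exp_log hz0]
      rw [h2]
      calc z ^ (d + 2) = Real.exp (Real.log z) ^ (d + 2) := by rw [Real.exp_log hz0]
        _ = Real.exp (((d:ℝ) + 2) * Real.log z) := by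
            rw [show ((d:ℝ) + 2) = ((d + 2 : ℕ) : ℝ) by push_cast; ring,
              Real.exp_nat_mul]
        _ ≤ Real.exp (f (Real.log z)) := Real.exp_le_exp.mpr h1
    -- polynomial eventually below x^(d+1)
    have hdeg : p.degree < (Polynomial.X ^ (d + 1) : Polynomial ℝ).degree := by
      rw [Polynomial.degree_X_pow]
      exact lt_of_le_of_lt Polynomial.degree_le_natDegree
        (by exact_mod_cast Nat.lt_succ_self d)
    have htend := Polynomial.div_tendsto_zero_of_degree_lt p _ hdeg
    have hev : ∀ᶠ x : ℝ in Filter.atTop,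
        Polynomial.eval x p / Polynomial.eval x (Polynomial.X ^ (d+1)) < 1 :=
      htend.eventually_lt_const one_pos
    obtain ⟨B, hB⟩ := Filter.eventually_atTop.mp hev
    refine ⟨max (max B (Real.exp (Real.exp X₁))) 2, fun x hx => ?_⟩
    have hx2 : (2:ℝ) ≤ x := le_trans (le_max_right _ _) hx
    have hxB : B ≤ x := le_trans (le_trans (le_max_left _ _) (le_max_left _ _)) hx
    have hxE : Real.exp (Real.exp X₁) ≤ x :=
      le_trans (le_trans (le_max_right _ _) (le_max_left _ _)) hx
    have hx0 : (0:ℝ) < x := by linarith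
    have h1 := hB x hxB
    rw [Polynomial.eval_pow, Polynomial.eval_X] at h1
    have hxp : (0:ℝ) < x ^ (d+1) := pow_pos hx0 _
    have h2 : Polynomial.eval x p < x ^ (d+1) := by
      rw [div_lt_one hxp] at h1; exact h1
    have h3 : x ^ (d+1) ≤ x ^ (d+2) :=
      pow_le_pow_right₀ (by linarith) (by omega)
    exact lt_of_lt_of_le (lt_of_lt_of_le h2 h3) (L2 x hxE)
  · -- iterate part
    intro ε hε
    set ε' := ε / 2 with hε'
    have hε'0 : 0 < ε' := by positivity
    have hε'ε : ε' < ε := by rw [hε']; linarith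
    obtain ⟨X₀, hX₀⟩ := gapG (-Real.log ε')
    have L1 : ∀ s : ℝ, Real.exp X₀ ≤ s → g s ≤ ε' * Real.exp s := by
      intro s hs
      have hs0 : 0 < s := lt_of_lt_of_le (Real.exp_pos _) hs
      have hu : X₀ ≤ Real.log s := (Real.le_log_iff_exp_le hs0).mpr hs
      have h1 := hX₀ _ hu
      have h2 : g s = Real.exp (g (Real.log s)) := by
        rw [← hcommg, Real.exp_log hs0]
      rw [h2]
      calc Real.exp (g (Real.log s)) ≤ Real.exp (Real.exp (Real.log s) + Real.log ε') :=
            Real.exp_le_exp.mpr (by linarith)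
        _ = ε' * Real.exp s := by
            rw [Real.exp_add, Real.exp_log hs0, Real.exp_log hε'0]; ring
    have L2 : ∀ t : ℝ, Real.exp (Real.exp X₀) ≤ t → g t ≤ Real.exp (ε' * t) := by
      intro t ht
      have ht0 : 0 < t := lt_of_lt_of_le (Real.exp_pos _) ht
      have hs : Real.exp X₀ ≤ Real.log t := (Real.le_log_iff_exp_le ht0).mpr ht
      have h1 := L1 _ hs
      have h2 : g t = Real.exp (g (Real.log t)) := by
        rw [← hcommg, Real.exp_log ht0]
      rw [h2]
      apply Real.exp_le_exp.mpr
      calc g (Real.log t) ≤ ε' * Real.exp (Real.log t) := h1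
        _ = ε' * t := by rw [Real.exp_log ht0]
    refine ⟨max (Real.exp (Real.exp (Real.exp X₀))) 2, fun x hx => ?_⟩
    have hx2 : (2:ℝ) ≤ x := le_trans (le_max_right _ _) hx
    have hxE : Real.exp (Real.exp (Real.exp X₀)) ≤ x := le_trans (le_max_left _ _) hx
    have hx0 : (0:ℝ) < x := by linarith
    have hx1 : (1:ℝ) < x := by linarith
    have ht : Real.exp (Real.exp X₀) ≤ Real.log x := (Real.le_log_iff_exp_le hx0).mpr hxE
    have h1 := L2 _ ht
    have h2 : g x = Real.exp (g (Real.log x)) := by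
      rw [← hcommg, Real.exp_log hx0]
    have h3 : g x ≤ Real.exp (x ^ ε') := by
      rw [h2]
      apply Real.exp_le_exp.mpr
      calc g (Real.log x) ≤ Real.exp (ε' * Real.log x) := h1
        _ = x ^ ε' := by rw [Real.rpow_def_of_pos hx0]; ring_nf
    have h4 : x ^ ε' < x ^ ε := Real.rpow_lt_rpow_of_exponent_lt hx1 hε'ε
    exact lt_of_le_of_lt h3 (Real.exp_lt_exp.mpr h4)
end

section
/- For every n > 1 there exists a continuous, strictly increasing function 𝔣 : ℝ≥0 → ℝ≥0 such that the n-fold composition 𝔣^n(x) = exp(x) for all x ≥ 0. -/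
/-!
Gluing the iterates `exp^[k]` of the linear map `[0, 1] → [0, exp 0]` gives an increasing
homeomorphism `G` of `ℝ≥0` with `G (y + 1) = exp (G y)`, i.e. `G` conjugates the translation by `1`
to `exp`. Conjugating the translation by `1 / n` instead gives an `n`-th iterative root of `exp`.
-/

open Function Filter
open scoped NNReal

namespace NNReal

variable {φ : ℝ≥0 → ℝ≥0}

/-- The superfunction of `φ` (`superfunction φ (y + 1) = φ (superfunction φ y)`) that on `[k, k + 1)`
is `φ^[k]` composed with the affine map of `[k, k + 1)` onto `[0, φ 0)`. -/
noncomputable def superfunction (φ : ℝ≥0 → ℝ≥0) (y : ℝ≥0) : ℝ≥0 :=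
  φ^[⌊y⌋₊] (φ 0 * (y - ⌊y⌋₊))

theorem superfunction_natCast_add (φ : ℝ≥0 → ℝ≥0) (k : ℕ) {t : ℝ≥0} (ht : t < 1) :
    superfunction φ (k + t) = φ^[k] (φ 0 * t) := by
  have hfloor : ⌊(k : ℝ≥0) + t⌋₊ = k := by
    rw [add_comm, Nat.floor_add_natCast zero_le, Nat.floor_eq_zero.mpr ht, zero_add]
  rw [superfunction, hfloor, add_tsub_cancel_left]

theorem superfunction_add_one (φ : ℝ≥0 → ℝ≥0) (y : ℝ≥0) :
    superfunction φ (y + 1) = φ (superfunction φ y) := by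
  have hfloor : ⌊y + 1⌋₊ = ⌊y⌋₊ + 1 := Nat.floor_add_one zero_le
  rw [superfunction, superfunction, hfloor, iterate_succ_apply', Nat.cast_succ,
    add_tsub_add_eq_tsub_right]

theorem iterate_floor_le_superfunction (hφ : Monotone φ) (y : ℝ≥0) :
    φ^[⌊y⌋₊] 0 ≤ superfunction φ y :=
  hφ.iterate _ zero_le

theorem superfunction_lt_iterate_floor_succ (hφ : StrictMono φ) (h0 : 0 < φ 0) (y : ℝ≥0) :
    superfunction φ y < φ^[⌊y⌋₊ + 1] 0 := by
  have hfract : y - ⌊y⌋₊ < 1 :=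
    tsub_lt_iff_left (Nat.floor_le zero_le) |>.mpr (by exact_mod_cast Nat.lt_floor_add_one y)
  rw [iterate_succ_apply]
  exact hφ.iterate _ (mul_lt_of_lt_one_right h0 hfract)

theorem monotone_iterate_apply_zero (hφ : Monotone φ) : Monotone fun k ↦ φ^[k] 0 :=
  monotone_nat_of_le_succ fun k ↦ by
    rw [iterate_succ_apply]
    exact hφ.iterate k zero_le

theorem strictMono_superfunction (hφ : StrictMono φ) (h0 : 0 < φ 0) :
    StrictMono (superfunction φ) := by
  intro y z hyz
  rcases (Nat.floor_mono hyz.le).lt_or_eq with hlt | heq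
  · calc superfunction φ y < φ^[⌊y⌋₊ + 1] 0 := superfunction_lt_iterate_floor_succ hφ h0 y
      _ ≤ φ^[⌊z⌋₊] 0 := monotone_iterate_apply_zero hφ.monotone hlt
      _ ≤ superfunction φ z := iterate_floor_le_superfunction hφ.monotone z
  · rw [superfunction, superfunction, heq]
    refine hφ.iterate _ (mul_lt_mul_of_pos_left ?_ h0)
    exact tsub_lt_tsub_right_of_le (heq ▸ Nat.floor_le zero_le) hyz

theorem surjective_superfunction (hc : Continuous φ)
    (hunb : Tendsto (fun k ↦ φ^[k] 0) atTop atTop) : Surjective (superfunction φ) := by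
  intro z
  classical
  have hex : ∃ m, z < φ^[m] 0 := (hunb.eventually_gt_atTop z).exists
  obtain ⟨k, hk⟩ : ∃ k, Nat.find hex = k + 1 :=
    Nat.exists_eq_succ_of_ne_zero fun h ↦ by simpa [h] using Nat.find_spec hex
  have hlt : z < φ^[k + 1] 0 := hk ▸ Nat.find_spec hex
  have hle : φ^[k] 0 ≤ z := not_lt.mp (Nat.find_min hex (by omega))
  have hcont : ContinuousOn (fun t ↦ φ^[k] (φ 0 * t)) (Set.Icc 0 1) :=
    ((hc.iterate k).comp (continuous_const.mul continuous_id)).continuousOn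
  obtain ⟨t, ht, htz⟩ := intermediate_value_Icc zero_le_one hcont
    ⟨by simpa using hle, by simpa [iterate_succ_apply] using hlt.le⟩
  have ht1 : t < 1 := ht.2.lt_of_ne <| by
    rintro rfl
    exact hlt.ne (by simpa [iterate_succ_apply] using htz.symm)
  exact ⟨k + t, (superfunction_natCast_add φ k ht1).trans htz⟩

theorem exists_continuous_strictMono_iterate_eq (hc : Continuous φ) (hφ : StrictMono φ)
    (h0 : 0 < φ 0) (hunb : Tendsto (fun k ↦ φ^[k] 0) atTop atTop) {n : ℕ} (hn : n ≠ 0) :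
    ∃ f : ℝ≥0 → ℝ≥0, Continuous f ∧ StrictMono f ∧ f^[n] = φ := by
  let G := StrictMono.orderIsoOfSurjective _ (strictMono_superfunction hφ h0)
    (surjective_superfunction hc hunb)
  let f := fun x ↦ G (G.symm x + (n : ℝ≥0)⁻¹)
  have hconj : Semiconj G (· + (n : ℝ≥0)⁻¹) f := fun y ↦ by simp [f]
  have hconj_n : Semiconj G (· + 1) f^[n] := by
    simpa [add_right_iterate, hn] using hconj.iterate_right n
  refine ⟨f, by fun_prop, fun x y hxy ↦ G.strictMono (by simpa using G.symm.strictMono hxy), ?_⟩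
  funext x
  obtain ⟨y, rfl⟩ := G.surjective x
  rw [← hconj_n y]
  exact superfunction_add_one φ y

noncomputable def exp (x : ℝ≥0) : ℝ≥0 :=
  ⟨Real.exp x, (Real.exp_pos x).le⟩

@[simp]
theorem coe_exp (x : ℝ≥0) : (exp x : ℝ) = Real.exp x :=
  rfl

theorem exp_pos (x : ℝ≥0) : 0 < exp x :=
  coe_pos.mp (Real.exp_pos x)

theorem continuous_exp : Continuous exp :=
  Continuous.subtype_mk (by fun_prop) _

theorem strictMono_exp : StrictMono exp := fun _ _ h ↦ by
  simpa [← coe_lt_coe] using h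

theorem natCast_le_exp_iterate_zero (k : ℕ) : (k : ℝ≥0) ≤ exp^[k] 0 := by
  induction k with
  | zero => simp
  | succ k ih =>
    rw [iterate_succ_apply', ← coe_le_coe, coe_exp, Nat.cast_succ, NNReal.coe_add, coe_one]
    exact (add_le_add_left (coe_le_coe.mpr ih) 1).trans (Real.add_one_le_exp _)

theorem tendsto_exp_iterate_zero : Tendsto (fun k ↦ exp^[k] 0) atTop atTop :=
  tendsto_atTop_mono natCast_le_exp_iterate_zero tendsto_natCast_atTop_atTop

end NNReal

/-- For every `n > 1` there is a continuous strictly increasing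
function `𝔣 : ℝ≥0 → ℝ≥0` whose `n`-fold composition is `exp`. -/
theorem stmt_13 (n : ℕ) (hn : 1 < n) :
    ∃ f : NNReal → NNReal, Continuous f ∧ StrictMono f ∧
      ∀ x : NNReal, ((f^[n] x : NNReal) : ℝ) = Real.exp (x : ℝ) := by
  obtain ⟨f, hc, hmono, hf⟩ := NNReal.exists_continuous_strictMono_iterate_eq
    NNReal.continuous_exp NNReal.strictMono_exp (NNReal.exp_pos 0)
    NNReal.tendsto_exp_iterate_zero (n := n) (by omega)
  exact ⟨f, hc, hmono, fun x ↦ by rw [hf, NNReal.coe_exp]⟩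
end

section
/- For every real x ≥ some absolute bound (e.g. x ≥ 25), the product of all primes p ≤ e^{x/3} is at least e^{x}. -/
/-!
Bertrand's postulate gives a prime `p ∈ (n/2, n]`, and `p * primorial (p - 1) ≤ primorial n`.
Iterating this `k` times from `n ≥ 2^k` gives `(n + 1)^k ≤ 2^(k+1 choose 2) * primorial n`.
For `n = ⌊e^(x/3)⌋` and `k = 6` the loss is the factor `2^21`, which `n + 1 > e^(x/3) ≥ 2^7`
absorbs: `e^x < (n + 1)^3 ≤ (n + 1)^6 / 2^21 ≤ primorial n`.
-/

theorem Nat.Prime.primorial_eq_mul_primorial_sub_one {p : ℕ} (hp : p.Prime) :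
    primorial p = p * primorial (p - 1) := by
  obtain ⟨q, rfl⟩ : ∃ q, p = q + 1 := ⟨p - 1, (Nat.sub_add_cancel hp.one_le).symm⟩
  rw [primorial, Finset.range_add_one, Finset.filter_insert, if_pos hp,
    Finset.prod_insert (by simp), Nat.add_sub_cancel, primorial]

theorem Nat.Prime.mul_primorial_sub_one_le {p n : ℕ} (hp : p.Prime) (hpn : p ≤ n) :
    p * primorial (p - 1) ≤ primorial n :=
  hp.primorial_eq_mul_primorial_sub_one ▸ primorial_mono hpn

theorem pow_le_two_pow_choose_mul_primorial (k : ℕ) :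
    ∀ n, 2 ^ k ≤ n → (n + 1) ^ k ≤ 2 ^ (k + 1).choose 2 * primorial n := by
  induction k with
  | zero => intro n _; simpa [Nat.one_le_iff_ne_zero] using primorial_ne_zero n
  | succ k ih =>
    intro n hn
    have hn2 : 2 ≤ n := (Nat.le_self_pow k.succ_ne_zero 2).trans hn
    obtain ⟨p, hp, hnp, hpn⟩ := Nat.exists_prime_lt_and_le_two_mul (n / 2) (by omega)
    have hn_le : n + 1 ≤ 2 * p := by omega
    have hp_large : 2 ^ k ≤ p - 1 := by rw [pow_succ] at hn; omega
    have hchoose : (k + 2).choose 2 = (k + 1) + (k + 1).choose 2 := by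
      rw [Nat.choose_succ_succ', Nat.choose_one_right]
    calc (n + 1) ^ (k + 1) ≤ (2 * p) ^ (k + 1) := Nat.pow_le_pow_left hn_le _
      _ = 2 ^ (k + 1) * p * (p - 1 + 1) ^ k := by
          rw [Nat.sub_add_cancel hp.one_le]; ring
      _ ≤ 2 ^ (k + 1) * p * (2 ^ (k + 1).choose 2 * primorial (p - 1)) := by
          gcongr; exact ih _ hp_large
      _ = 2 ^ (k + 2).choose 2 * (p * primorial (p - 1)) := by rw [hchoose, pow_add]; ring
      _ ≤ 2 ^ (k + 2).choose 2 * primorial n := by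
          gcongr; exact hp.mul_primorial_sub_one_le (by omega)

/-- For every real `x ≥ 25`, the product of all primes
`p ≤ e^(x/3)` is at least `e^x`. -/
theorem stmt_14 (x : ℝ) (hx : 25 ≤ x) :
    Real.exp x ≤
      ∏ p ∈ Finset.filter Nat.Prime (Finset.range (⌊Real.exp (x / 3)⌋₊ + 1)), (p : ℝ) := by
  set n := ⌊Real.exp (x / 3)⌋₊
  have hn : Real.exp (x / 3) < n + 1 := Nat.lt_floor_add_one _
  have hexp : (2 : ℝ) ^ 7 ≤ Real.exp (x / 3) :=
    calc (2 : ℝ) ^ 7 ≤ Real.exp 1 ^ 7 := by gcongr; exact Real.exp_one_gt_two.le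
      _ = Real.exp 7 := by rw [← Real.exp_nat_mul]; norm_num
      _ ≤ Real.exp (x / 3) := Real.exp_le_exp.mpr (by linarith)
  have hn_large : (2 : ℝ) ^ 7 ≤ n + 1 := by linarith
  have hprimorial : ((n + 1) ^ 6 : ℝ) ≤ 2 ^ 21 * (primorial n : ℝ) := by
    have h64 : 2 ^ 6 ≤ n := by exact_mod_cast (by linarith : (2 : ℝ) ^ 6 ≤ n)
    exact_mod_cast pow_le_two_pow_choose_mul_primorial 6 n h64
  calc Real.exp x = Real.exp (x / 3) ^ 3 := by rw [← Real.exp_nat_mul]; ring_nf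
    _ ≤ (n + 1) ^ 3 := by gcongr
    _ ≤ (primorial n : ℝ) := by nlinarith [pow_le_pow_left₀ (by positivity) hn_large 3]
    _ = _ := by simp [primorial]
end

section
/- There exists a sequence of integers (d_n) with d₀ = 2·3·5 such that for all n ≥ 1: e^{d_{n-1}} ≤ d_n < e^{(4/3)·d_{n-1}}, and d_n / d_{n-1} is the product of all primes up to some integer m_n. -/
/-!
Start from `d = 30` and multiply by primes in increasing order, stopping at the first `m` with
`e^d ≤ d · m#`. The last factor is at most `m`, so the result is below `e^d · m`, and it suffices
that `m ≤ e^(d/3)`. This holds because Bertrand's postulate puts a prime in every `(2^i, 2^(i+1)]`,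
whence `(2^j)# ≥ 2^(j(j-1)/2)`, which already exceeds `e^d` for `j = ⌊2d/5⌋`, while
`2^j ≤ e^(d/3)`.
-/

open Finset Real

lemma primorial_succ_le (n : ℕ) : primorial (n + 1) ≤ (n + 1) * primorial n := by
  rw [primorial, range_add_one, filter_insert]
  split_ifs
  · rw [prod_insert (by simp)]; rfl
  · exact Nat.le_mul_of_pos_left _ n.succ_pos

lemma Nat.Prime.mul_primorial_dvd_primorial {p n m : ℕ} (hp : p.Prime) (hnp : n < p)
    (hpm : p ≤ m) : p * primorial n ∣ primorial m :=
  Nat.Coprime.mul_dvd_of_dvd_of_dvd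
    ((Nat.Prime.coprime_iff_not_dvd hp).2 (by rw [hp.dvd_primorial_iff]; omega))
    (hp.dvd_primorial_iff.2 hpm) (primorial_dvd_primorial (by omega))

theorem two_pow_sum_range_le_primorial_two_pow (j : ℕ) :
    2 ^ (∑ i ∈ range j, i) ≤ primorial (2 ^ j) := by
  induction j with
  | zero => simp
  | succ j ih =>
    obtain ⟨p, hp, hjp, hpj⟩ := Nat.exists_prime_lt_and_le_two_mul (2 ^ j) (by positivity)
    calc 2 ^ (∑ i ∈ range (j + 1), i) = 2 ^ j * 2 ^ (∑ i ∈ range j, i) := by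
          rw [sum_range_succ, pow_add, mul_comm]
      _ ≤ p * primorial (2 ^ j) := Nat.mul_le_mul hjp.le ih
      _ ≤ primorial (2 ^ (j + 1)) := Nat.le_of_dvd (primorial_pos _)
          (hp.mul_primorial_dvd_primorial hjp (by rwa [pow_succ, mul_comm]))

theorem exists_mul_primorial_mem_Ico {a M : ℕ} {x y : ℝ} (hax : a < x) (hMy : M ≤ y)
    (hxM : x ≤ a * primorial M) : ∃ m, ((a * primorial m : ℕ) : ℝ) ∈ Set.Ico x (x * y) := by
  classical
  have hex : ∃ m, x ≤ a * primorial m := ⟨M, hxM⟩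
  obtain ⟨k, hk⟩ : ∃ k, Nat.find hex = k + 1 := Nat.exists_eq_succ_of_ne_zero fun h0 => by
    have := Nat.find_spec hex
    rw [h0, primorial_zero, Nat.cast_one, mul_one] at this
    linarith
  refine ⟨k + 1, by push_cast; exact hk ▸ Nat.find_spec hex, ?_⟩
  have hkx : a * primorial k < x := not_le.1 (Nat.find_min hex (by omega))
  have hkM : k + 1 ≤ M := hk ▸ Nat.find_min' hex hxM
  have hx : 0 ≤ x := (Nat.cast_nonneg a).trans hax.le
  calc ((a * primorial (k + 1) : ℕ) : ℝ) ≤ (k + 1) * (a * primorial k) := by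
        rw [mul_left_comm]; exact_mod_cast Nat.mul_le_mul_left a (primorial_succ_le k)
    _ < (k + 1) * x := by gcongr
    _ ≤ y * x := by
        have : (k + 1 : ℝ) ≤ M := by exact_mod_cast hkM
        gcongr; linarith
    _ = x * y := mul_comm y x

theorem exists_two_pow_le_exp_div_three_and_exp_le_primorial {d : ℕ} (hd : 30 ≤ d) :
    ∃ j : ℕ, (2 : ℝ) ^ j ≤ exp (d / 3) ∧ exp d ≤ primorial (2 ^ j) := by
  have two_pow_eq (n : ℕ) : (2 : ℝ) ^ n = exp (n * log 2) := by
    rw [exp_nat_mul, exp_log two_pos]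
  have := log_two_gt_d9
  have := log_two_lt_d9
  set j := 2 * d / 5
  have hj : 2 * d ≤ 5 * j + 4 ∧ 5 * j ≤ 2 * d := by omega
  refine ⟨j, ?_, ?_⟩
  · have : (5 * j : ℝ) ≤ 2 * d := by exact_mod_cast hj.2
    rw [two_pow_eq]
    gcongr
    nlinarith
  · set S := ∑ i ∈ range j, i with hS_def
    have hS : 3 * d ≤ S * 2 := by
      rw [hS_def, sum_range_id_mul_two]
      obtain ⟨k, hk⟩ : ∃ k, j = k + 1 := ⟨j - 1, by omega⟩
      rw [hk, Nat.add_sub_cancel]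
      nlinarith
    have : (3 * d : ℝ) ≤ S * 2 := by exact_mod_cast hS
    calc exp d ≤ exp (S * log 2) := by gcongr; nlinarith
      _ = ((2 ^ S : ℕ) : ℝ) := by push_cast; rw [two_pow_eq]
      _ ≤ primorial (2 ^ j) := by exact_mod_cast two_pow_sum_range_le_primorial_two_pow j

theorem exists_mul_primorial_mem_Ico_exp {d : ℕ} (hd : 30 ≤ d) :
    ∃ m, ((d * primorial m : ℕ) : ℝ) ∈ Set.Ico (exp d) (exp (4 / 3 * d)) := by
  obtain ⟨j, h2j, hprim⟩ := exists_two_pow_le_exp_div_three_and_exp_le_primorial hd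
  rw [show (4 / 3 * d : ℝ) = d + d / 3 by ring, exp_add]
  refine exists_mul_primorial_mem_Ico (M := 2 ^ j) ?_ (by exact_mod_cast h2j) ?_
  · linarith [add_one_le_exp (d : ℝ)]
  · exact hprim.trans (le_mul_of_one_le_left (by positivity) (by exact_mod_cast (by omega : 1 ≤ d)))

/-- There is a sequence of integers `d` with `d 0 = 2·3·5 = 30`,
`e^(d n) ≤ d (n+1) < e^((4/3)·d n)`, and `d (n+1) / d n` a product of all primes up
to some integer `m`. -/
theorem stmt_15 : ∃ d : ℕ → ℕ, d 0 = 30 ∧ ∀ n : ℕ,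
    Real.exp (d n) ≤ (d (n + 1) : ℝ) ∧
    ((d (n + 1) : ℝ) < Real.exp ((4 / 3 : ℝ) * (d n : ℝ))) ∧
    ∃ m : ℕ, d (n + 1) = d n * ∏ p ∈ Finset.filter Nat.Prime (Finset.range (m + 1)), p := by
  choose! m hm using fun d : ℕ => exists_mul_primorial_mem_Ico_exp (d := d)
  let next (d : ℕ) : ℕ := d * primorial (m d)
  have h30 (n : ℕ) : 30 ≤ next^[n] 30 := by
    induction n with
    | zero => exact le_rfl
    | succ n ih =>
      rw [Function.iterate_succ_apply']
      exact ih.trans (Nat.le_mul_of_pos_right _ (primorial_pos _))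
  refine ⟨fun n => next^[n] 30, rfl, fun n => ?_⟩
  simp only [Function.iterate_succ_apply']
  exact ⟨(hm _ (h30 n)).1, (hm _ (h30 n)).2, m _, rfl⟩
end

section
/- Let (d_n) be as constructed (d₀ = 2·3·5, d_n/d_{n-1} a primorial ratio with e^{d_{n-1}} ≤ d_n < e^{(4/3)d_{n-1}}). Fix a constant c > 0. Then for all sufficiently large n, every prime p ≤ c·√(d_n) divides d_{n+1}. -/
/-- For the sequence `d` of the paper (`d 0 = 30`,
`e^(d n) ≤ d (n+1) < e^((4/3)·d n)` and `d (n+1)/d n` a primorial-type product),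
and any fixed constant `c > 0`, for all sufficiently large `n` every prime
`p ≤ c·√(d n)` divides `d (n+1)`. -/
theorem stmt_16 (d : ℕ → ℕ) (hd0 : d 0 = 30)
    (hd : ∀ n : ℕ,
      Real.exp (d n) ≤ (d (n + 1) : ℝ) ∧
      ((d (n + 1) : ℝ) < Real.exp ((4 / 3 : ℝ) * (d n : ℝ))) ∧
      ∃ m : ℕ, d (n + 1) = d n * ∏ p ∈ Finset.filter Nat.Prime (Finset.range (m + 1)), p)
    (c : ℝ) (hc : 0 < c) :
    ∃ N : ℕ, ∀ n ≥ N, ∀ p : ℕ, p.Prime → (p : ℝ) ≤ c * Real.sqrt (d n) →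
      p ∣ d (n + 1) := by
  have hmono : ∀ n, d n + 1 ≤ d (n + 1) := by
    intro n
    have h1 := (hd n).1
    have h2 : (d n : ℝ) + 1 ≤ Real.exp (d n) := Real.add_one_le_exp _
    have h3 : (d n : ℝ) + 1 ≤ (d (n + 1) : ℝ) := h2.trans h1
    exact_mod_cast h3
  have hge : ∀ n, n + 30 ≤ d n := by
    intro n
    induction n with
    | zero => simp [hd0]
    | succ k ih => have := hmono k; omega
  set L : ℝ := Real.log 4 with hL
  have hL0 : 0 < L := Real.log_pos (by norm_num)
  refine ⟨⌈(2 * c * L) ^ 2⌉₊, ?_⟩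
  intro n hn p hp hple
  obtain ⟨m, hm⟩ := (hd n).2.2
  have hdn30 : (30 : ℕ) ≤ d n := le_trans (by omega) (hge n)
  have hdn0 : (0 : ℝ) < (d n : ℝ) := by
    have : (0 : ℕ) < d n := by omega
    exact_mod_cast this
  set s : ℝ := Real.sqrt (d n) with hs
  have hs0 : 0 < s := Real.sqrt_pos.2 hdn0
  have hssq : s * s = (d n : ℝ) := Real.mul_self_sqrt hdn0.le
  -- s ≥ 4
  have hs4 : (4 : ℝ) ≤ s := by
    have h16 : (16 : ℝ) ≤ (d n : ℝ) := by
      have : (16 : ℕ) ≤ d n := by omega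
      exact_mod_cast this
    have := Real.sqrt_le_sqrt h16
    calc (4 : ℝ) = Real.sqrt 16 := by
          rw [show (16 : ℝ) = 4 ^ 2 by norm_num, Real.sqrt_sq (by norm_num)]
      _ ≤ s := this
  -- log (d n) ≤ (d n) / 2
  have hlog : Real.log (d n) ≤ (d n : ℝ) / 2 := by
    have h1 : Real.log s ≤ s - 1 := Real.log_le_sub_one_of_pos hs0
    have h2 : Real.log (d n) = 2 * Real.log s := by
      rw [← hssq, Real.log_mul hs0.ne' hs0.ne']; ring
    nlinarith [hssq, hs4]
  -- d (n+1) ≤ d n * 4 ^ m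
  have hub : (d (n + 1) : ℝ) ≤ (d n : ℝ) * 4 ^ m := by
    have hprim : (∏ p ∈ Finset.filter Nat.Prime (Finset.range (m + 1)), p) ≤ 4 ^ m :=
      primorial_le_4_pow m
    have : d (n + 1) ≤ d n * 4 ^ m := by
      rw [hm]; exact Nat.mul_le_mul_left _ hprim
    calc (d (n + 1) : ℝ) ≤ ((d n * 4 ^ m : ℕ) : ℝ) := by exact_mod_cast this
      _ = (d n : ℝ) * 4 ^ m := by push_cast; ring
  -- d n ≤ log (d n) + m * L
  have hkey : (d n : ℝ) ≤ Real.log (d n) + m * L := by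
    have h1 : Real.exp (d n) ≤ (d n : ℝ) * 4 ^ m := le_trans (hd n).1 hub
    have hpos : (0 : ℝ) < (d n : ℝ) * 4 ^ m := by positivity
    have h2 : (d n : ℝ) ≤ Real.log ((d n : ℝ) * 4 ^ m) := by
      rw [Real.le_log_iff_exp_le hpos]; exact h1
    rwa [Real.log_mul hdn0.ne' (by positivity), Real.log_pow] at h2
  -- m ≥ d n / (2L)
  have hm_big : (d n : ℝ) / 2 ≤ m * L := by linarith
  -- 2cL ≤ s
  have hscl : 2 * c * L ≤ s := by
    have h1 : ((2 * c * L) ^ 2 : ℝ) ≤ (d n : ℝ) := by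
      have h2 : (⌈(2 * c * L) ^ 2⌉₊ : ℝ) ≤ (d n : ℝ) := by
        have : ⌈(2 * c * L) ^ 2⌉₊ ≤ d n := le_trans hn (le_trans (by omega) (hge n))
        exact_mod_cast this
      exact le_trans (Nat.le_ceil _) h2
    have := Real.sqrt_le_sqrt h1
    rwa [Real.sqrt_sq (by positivity)] at this
  -- c * s ≤ m
  have hcs : c * s ≤ (m : ℝ) := by
    have h1 : 2 * L * (c * s) ≤ s * s := by nlinarith
    rw [hssq] at h1
    have h2 : c * s ≤ (d n : ℝ) / (2 * L) := by
      rw [le_div_iff₀ (by positivity)]; linarith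
    have h3 : (d n : ℝ) / (2 * L) ≤ m := by
      rw [div_le_iff₀ (by positivity)]
      have : (d n : ℝ) ≤ 2 * (m * L) := by linarith
      linarith
    linarith
  have hpm : p ≤ m := by
    have : (p : ℝ) ≤ (m : ℝ) := le_trans hple hcs
    exact_mod_cast this
  have hdvd : p ∣ ∏ q ∈ Finset.filter Nat.Prime (Finset.range (m + 1)), q :=
    Finset.dvd_prod_of_mem _ (Finset.mem_filter.2 ⟨Finset.mem_range.2 (by omega), hp⟩)
  rw [hm]
  exact hdvd.mul_left _
end

section
/- With (d_n) as constructed (d₀ = 2·3·5 = 30), for n ≥ 2 and k > 2: if 2^k divides d_n then 2^k < 2·log(log(d_n)). -/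
open Finset in
lemma prim_not_four_dvd (m : ℕ) :
    ¬ (4 ∣ ∏ p ∈ Finset.filter Nat.Prime (Finset.range (m + 1)), p) := by
  set S := Finset.filter Nat.Prime (Finset.range (m + 1)) with hS
  intro h4
  have h2 : (2 : ℕ) ∣ ∏ p ∈ S, p := dvd_trans (by norm_num) h4
  have hp2 : Nat.Prime 2 := Nat.prime_two
  obtain ⟨p, hpS, hdvd⟩ := (hp2.prime.dvd_finset_prod_iff _).1 h2
  have hp : p = 2 := ((Nat.prime_dvd_prime_iff_eq hp2 (Finset.mem_filter.1 hpS).2).1 hdvd).symm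
  subst hp
  have heq : ∏ p ∈ S, p = 2 * ∏ p ∈ S.erase 2, p := (Finset.mul_prod_erase _ _ hpS).symm
  rw [heq] at h4
  have : (2 : ℕ) ∣ ∏ p ∈ S.erase 2, p := by
    have : (2*2 : ℕ) ∣ 2 * ∏ p ∈ S.erase 2, p := by norm_num at h4 ⊢; exact h4
    exact (mul_dvd_mul_iff_left (by norm_num : (2:ℕ) ≠ 0)).1 this
  obtain ⟨q, hqS, hq⟩ := (hp2.prime.dvd_finset_prod_iff _).1 this
  have : q = 2 := ((Nat.prime_dvd_prime_iff_eq hp2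
    (Finset.mem_filter.1 (Finset.mem_of_mem_erase hqS)).2).1 hq).symm
  exact (Finset.ne_of_mem_erase hqS) this

lemma prim_val_le (m : ℕ) :
    padicValNat 2 (∏ p ∈ Finset.filter Nat.Prime (Finset.range (m + 1)), p) ≤ 1 := by
  by_contra h
  push_neg at h
  have := pow_dvd_pow 2 h
  have hd := dvd_trans this (pow_padicValNat_dvd (p := 2)
    (n := ∏ p ∈ Finset.filter Nat.Prime (Finset.range (m + 1)), p))
  exact prim_not_four_dvd m (by norm_num at hd ⊢; exact hd)

/-- For the sequence `d` of the paper (`d 0 = 30`,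
`e^(d n) ≤ d (n+1) < e^((4/3)·d n)`, `d (n+1)/d n` a primorial-type product),
if `n ≥ 2`, `k > 2` and `2^k ∣ d n`, then `2^k < 2·log(log(d n))`. -/
theorem stmt_17 (d : ℕ → ℕ) (hd0 : d 0 = 30)
    (hd : ∀ n : ℕ,
      Real.exp (d n) ≤ (d (n + 1) : ℝ) ∧
      ((d (n + 1) : ℝ) < Real.exp ((4 / 3 : ℝ) * (d n : ℝ))) ∧
      ∃ m : ℕ, d (n + 1) = d n * ∏ p ∈ Finset.filter Nat.Prime (Finset.range (m + 1)), p) :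
    ∀ n ≥ 2, ∀ k > 2, 2 ^ k ∣ d n →
      ((2 ^ k : ℕ) : ℝ) < 2 * Real.log (Real.log (d n)) := by
  -- positivity
  have hpos : ∀ n, 0 < d n := by
    intro n
    induction n with
    | zero => omega
    | succ n ih =>
      obtain ⟨m, hm⟩ := (hd n).2.2
      rw [hm]
      exact Nat.mul_pos ih (Finset.prod_pos fun p hp => (Finset.mem_filter.1 hp).2.pos)
  -- 15 divides
  have h15 : ∀ n, 15 ∣ d n := by
    intro n
    induction n with
    | zero => omega
    | succ n ih =>
      obtain ⟨m, hm⟩ := (hd n).2.2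
      exact hm ▸ Dvd.dvd.mul_right ih _
  -- valuation step
  have hval : ∀ n, padicValNat 2 (d (n+1)) ≤ padicValNat 2 (d n) + 1 := by
    intro n
    obtain ⟨m, hm⟩ := (hd n).2.2
    have hP : (∏ p ∈ Finset.filter Nat.Prime (Finset.range (m + 1)), p) ≠ 0 :=
      (Finset.prod_pos fun p hp => (Finset.mem_filter.1 hp).2.pos).ne'
    rw [hm, padicValNat.mul (hpos n).ne' hP]
    exact Nat.add_le_add_left (prim_val_le m) _
  intro n hn k hk hdvd
  obtain ⟨j, rfl⟩ : ∃ j, n = j + 2 := ⟨n - 2, by omega⟩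
  -- k ≤ padicValNat 2 (d (j+2))
  haveI : Fact (Nat.Prime 2) := ⟨Nat.prime_two⟩
  have hkle : k ≤ padicValNat 2 (d (j+2)) :=
    (padicValNat_dvd_iff_le (hpos _).ne').1 hdvd
  have hk2 : k - 2 ≤ padicValNat 2 (d j) := by
    have h1 := hval j
    have h2 := hval (j+1)
    have h3 : j + 1 + 1 = j + 2 := rfl
    rw [h3] at h2
    omega
  have hdvdj : 2 ^ (k - 2) ∣ d j :=
    dvd_trans (pow_dvd_pow 2 hk2) (pow_padicValNat_dvd)
  -- 15 * 2^(k-2) ∣ d j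
  have hcop : Nat.Coprime 15 (2 ^ (k - 2)) := by
    apply Nat.Coprime.pow_right
    norm_num
  have hjd : 15 * 2 ^ (k - 2) ∣ d j := hcop.mul_dvd_of_dvd_of_dvd (h15 j) hdvdj
  have hjge : 15 * 2 ^ (k - 2) ≤ d j := Nat.le_of_dvd (hpos j) hjd
  -- real part
  have hpos1 : (0 : ℝ) < d (j+1) := by exact_mod_cast hpos (j+1)
  have hpos2 : (0 : ℝ) < d (j+2) := by exact_mod_cast hpos (j+2)
  have hlog2 : (d (j+1) : ℝ) ≤ Real.log (d (j+2)) :=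
    (Real.le_log_iff_exp_le hpos2).2 (hd (j+1)).1
  have hlog1 : (d j : ℝ) ≤ Real.log (d (j+1)) :=
    (Real.le_log_iff_exp_le hpos1).2 (hd j).1
  have hll : (d j : ℝ) ≤ Real.log (Real.log (d (j+2))) := by
    calc (d j : ℝ) ≤ Real.log (d (j+1)) := hlog1
    _ ≤ Real.log (Real.log (d (j+2))) := by
        exact Real.log_le_log hpos1 hlog2
  have hcast : ((2:ℕ) ^ k : ℝ) = 4 * ((2:ℕ) ^ (k-2) : ℝ) := by
    have : k = (k - 2) + 2 := by omega
    rw [this]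
    push_cast [pow_add]
    ring
  have h30 : (30 : ℝ) * ((2:ℕ) ^ (k-2) : ℝ) ≤ 2 * Real.log (Real.log (d (j+2))) := by
    have : (15 * 2 ^ (k-2) : ℕ) ≤ (d j : ℕ) := hjge
    have hr : (15 : ℝ) * ((2:ℕ) ^ (k-2) : ℝ) ≤ (d j : ℝ) := by exact_mod_cast this
    nlinarith [hll]
  have hppos : (0:ℝ) < ((2:ℕ) ^ (k-2) : ℝ) := by positivity
  have : ((2 ^ k : ℕ) : ℝ) = ((2:ℕ):ℝ) ^ k := by push_cast; ring
  rw [this, hcast]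
  nlinarith
end

section
/- Fix ε > 0. Let n be a positive integer, let 0 ≤ l₁ < l₂ < ⋯ < l_k ≤ n and m₀ be integers with l_i ≢ l_j (mod m₀) for i ≠ j. Let f ∈ ℤ[X] have degree ≤ n with f ∉ M = ℤX^{l₁} + ⋯ + ℤX^{l_k}. Then there exists an odd prime q < c·n^{1/2+ε} (c an absolute constant depending on ε) such that f ∉ M + I_q, where I_q = ⟨X^{lcm(q, m₀)} − 1⟩ ⊆ ℤ[X]. -/
/-!
Suppose `f ∈ M + I_q` for every odd prime `q` below the bound, say `f = g_q + h_q` with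
`g_q ∈ M` and `X ^ lcm(q, m₀) - 1 ∣ h_q`. Then `g_q - g_q' = h_q' - h_q ∈ M` is divisible by
`X ^ m₀ - 1`, and no nonzero element of `M` is, because the exponents `l_i` are distinct mod `m₀`;
so all the `g_q` coincide with one `g`. Then `f - g` is divisible by every cyclotomic polynomial `Φ_q`,
hence by their product, of degree `∑ (q - 1)`. Chebyshev's lower bound for `π` gives more than
`2√n` odd primes below `n ^ (1/2 + ε)` for large `n`, so this degree exceeds `n ≥ deg (f - g)`
and `f = g ∈ M`.
-/

open Finset Polynomial Filter Asymptotics Real Submodule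
open scoped Nat

section PrimeSums

lemma Finset.sum_range_card_le_sum (T : Finset ℕ) : ∑ i ∈ range #T, i ≤ ∑ t ∈ T, t := by
  refine T.induction_on_max (by simp) fun a s hlt _ => ?_
  have has : a ∉ s := fun h => (hlt a h).false
  have hcard : #s ≤ a := by
    simpa using card_le_card (fun x hx => mem_range.2 (hlt x hx) : s ⊆ range a)
  rw [card_insert_of_notMem has, sum_range_succ, sum_insert has]
  omega

lemma sum_range_card_le_sum_totient {S : Finset ℕ} (hS : ∀ q ∈ S, q.Prime) :
    ∑ i ∈ range #S, i ≤ ∑ q ∈ S, φ q := by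
  have hinj : Set.InjOn (· - 1) (S : Set ℕ) := fun q hq q' hq' h => by
    have := (hS q hq).one_lt; have := (hS q' hq').one_lt; simp only at h; omega
  calc ∑ i ∈ range #S, i = ∑ i ∈ range #(S.image (· - 1)), i := by rw [card_image_of_injOn hinj]
    _ ≤ ∑ t ∈ S.image (· - 1), t := sum_range_card_le_sum _
    _ = ∑ q ∈ S, φ q := by
      rw [sum_image hinj]
      exact sum_congr rfl fun q hq => (Nat.totient_prime (hS q hq)).symm

lemma lt_sum_range_of_two_mul_sqrt_add_one_le {n N : ℕ} (hn : 1 ≤ n) (hN : 2 * √n + 1 ≤ N) :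
    n < ∑ i ∈ range N, i := by
  have hN1 : 1 ≤ N := by exact_mod_cast (le_add_of_nonneg_left (by positivity)).trans hN
  suffices 2 * n < N * (N - 1) by rw [← sum_range_id_mul_two] at this; omega
  have hsq : √(n : ℝ) ^ 2 = n := sq_sqrt (Nat.cast_nonneg n)
  have : (1 : ℝ) ≤ n := by exact_mod_cast hn
  exact_mod_cast (show (2 * n : ℝ) < N * ((N - 1 : ℕ) : ℝ) by
    rw [Nat.cast_sub hN1]; push_cast; nlinarith [sqrt_nonneg (n : ℝ)])

lemma eventually_mul_rpow_lt_primeCounting {b : ℝ} (hb : b < 1) (K : ℝ) :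
    ∀ᶠ x : ℝ in atTop, K * x ^ b < Nat.primeCounting ⌊x⌋₊ := by
  have hpow : (fun x : ℝ => x ^ b * log x) =o[atTop] id := by
    refine ((isBigO_refl (fun x : ℝ => x ^ b) atTop).mul_isLittleO
      (isLittleO_log_rpow_atTop (sub_pos.2 hb))).congr' .rfl ?_
    filter_upwards [eventually_gt_atTop 0] with x hx
    rw [← rpow_add hx, add_sub_cancel, rpow_one, id]
  have hshift : (fun x : ℝ => log (x + 2)) =o[atTop] id :=
    (isLittleO_log_id_atTop.comp_tendsto (tendsto_atTop_add_const_right _ 2 tendsto_id))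
      |>.trans_isBigO ((isBigO_refl _ _).add (isLittleO_const_id_atTop (2 : ℝ)).isBigO)
  have hsmall := ((hpow.const_mul_left K).add hshift).add (isLittleO_const_id_atTop (log 2))
  filter_upwards [hsmall.bound (half_pos (log_pos one_lt_two)), eventually_gt_atTop 1]
    with x hx hx1
  refine lt_of_lt_of_le ?_ (Chebyshev.pi_ge' hx1)
  rw [lt_div_iff₀ (log_pos hx1)]
  rw [id, norm_of_nonneg (by linarith : 0 ≤ x)] at hx
  have := le_norm_self (K * (x ^ b * log x) + log (x + 2) + log 2)
  nlinarith [log_pos one_lt_two]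

lemma eventually_two_mul_sqrt_add_two_le_primeCounting {a : ℝ} (ha : 1 / 2 < a) :
    ∀ᶠ n : ℕ in atTop, 2 * √n + 2 ≤ Nat.primeCounting ⌊(n : ℝ) ^ a⌋₊ := by
  have hb : (2 * a)⁻¹ < 1 := inv_lt_one_of_one_lt₀ (by linarith)
  have hlim := (tendsto_rpow_atTop (by linarith : 0 < a)).comp tendsto_natCast_atTop_atTop
  filter_upwards [hlim.eventually (eventually_mul_rpow_lt_primeCounting hb 4),
    eventually_ge_atTop 1] with n hn hn1
  have hsqrt : ((n : ℝ) ^ a) ^ (2 * a)⁻¹ = √n := by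
    rw [← rpow_mul (Nat.cast_nonneg n), sqrt_eq_rpow]
    congr 1
    field_simp
  have : (1 : ℝ) ≤ √n := one_le_sqrt.2 (by exact_mod_cast hn1)
  simp only [Function.comp, hsqrt] at hn
  linarith

noncomputable def oddPrimesLE (x : ℝ) : Finset ℕ := (Nat.primesLE ⌊x⌋₊).erase 2

lemma mem_oddPrimesLE {x : ℝ} {q : ℕ} : q ∈ oddPrimesLE x ↔ q ≠ 2 ∧ q ≤ ⌊x⌋₊ ∧ q.Prime := by
  rw [oddPrimesLE, mem_erase, Nat.mem_primesLE]

lemma oddPrimesLE_mono : Monotone oddPrimesLE := fun _ _ h =>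
  erase_subset_erase _ (Nat.primesLE_mono (Nat.floor_mono h))

lemma primeCounting_floor_le_card_oddPrimesLE_add_one (x : ℝ) :
    Nat.primeCounting ⌊x⌋₊ ≤ #(oddPrimesLE x) + 1 := by
  rw [← Nat.primesLE_card_eq_primeCounting]
  have := pred_card_le_card_erase (s := Nat.primesLE ⌊x⌋₊) (a := 2)
  rw [oddPrimesLE]
  omega

lemma exists_lt_sum_totient_oddPrimesLE {a : ℝ} (ha : 1 / 2 < a) :
    ∃ c > 0, ∀ n : ℕ, 1 ≤ n → n < ∑ q ∈ oddPrimesLE (c * n ^ a), φ q := by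
  have hsum : ∀ x, ∑ i ∈ range #(oddPrimesLE x), i ≤ ∑ q ∈ oddPrimesLE x, φ q := fun x =>
    sum_range_card_le_sum_totient fun q hq => (mem_oddPrimesLE.1 hq).2.2
  have hmono {x y : ℝ} (h : x ≤ y) : ∑ q ∈ oddPrimesLE x, φ q ≤ ∑ q ∈ oddPrimesLE y, φ q :=
    sum_le_sum_of_subset (oddPrimesLE_mono h)
  obtain ⟨N, hN⟩ := eventually_atTop.1 <|
    (eventually_two_mul_sqrt_add_two_le_primeCounting ha).and (eventually_ge_atTop 1)
  replace hN : ∀ n ≥ N, n < ∑ q ∈ oddPrimesLE (n ^ a), φ q := fun n hn => by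
    obtain ⟨hπ, hn1⟩ := hN n hn
    refine (lt_sum_range_of_two_mul_sqrt_add_one_le hn1 ?_).trans_le (hsum _)
    have : (Nat.primeCounting ⌊(n : ℝ) ^ a⌋₊ : ℝ) ≤ #(oddPrimesLE ((n : ℝ) ^ a)) + 1 := by
      exact_mod_cast primeCounting_floor_le_card_oddPrimesLE_add_one _
    linarith
  -- `c ≥ N ^ a` settles the finitely many `n < N` by monotonicity.
  refine ⟨max 1 ((N : ℝ) ^ a), by positivity, fun n hn => ?_⟩
  have hna : (1 : ℝ) ≤ (n : ℝ) ^ a := Real.one_le_rpow (by exact_mod_cast hn) (by linarith)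
  rcases le_or_gt N n with hNn | hnN
  · refine (hN n hNn).trans_le (hmono ?_)
    exact le_mul_of_one_le_left (by linarith) (le_max_left _ _)
  · refine hnN.trans ((hN N le_rfl).trans_le (hmono ?_))
    exact (le_max_right _ _).trans (le_mul_of_one_le_right (by positivity) hna)

end PrimeSums

section Polynomials

lemma mem_sup_restrictScalars_span_singleton_iff {R A : Type*} [CommSemiring R] [CommRing A]
    [Algebra R A] {M : Submodule R A} {P f : A} :
    f ∈ M ⊔ (Ideal.span {P}).restrictScalars R ↔ ∃ g ∈ M, P ∣ f - g := by
  simp only [Submodule.mem_sup, restrictScalars_mem, Ideal.mem_span_singleton]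
  constructor
  · rintro ⟨g, hg, h, hh, rfl⟩
    exact ⟨g, hg, by simpa using hh⟩
  · rintro ⟨g, hg, hdvd⟩
    exact ⟨g, hg, f - g, hdvd, add_sub_cancel g f⟩

variable {R ι : Type*} [CommRing R] {l : ι → ℕ}

lemma natDegree_le_of_mem_span_X_pow {n : ℕ} (hl : ∀ i, l i ≤ n) {p : R[X]}
    (hp : p ∈ span R (Set.range fun i => (X : R[X]) ^ l i)) : p.natDegree ≤ n := by
  refine natDegree_le_iff_degree_le.2 (mem_degreeLE.1 ((span_le.2 ?_) hp))
  rintro _ ⟨i, rfl⟩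
  exact mem_degreeLE.2 (degree_X_pow_le _ |>.trans (by exact_mod_cast hl i))

-- Reduction modulo `X ^ m - 1` is evaluation at the generator of `R[ZMod m]`.
lemma eq_zero_of_mem_span_X_pow_of_dvd [Fintype ι] {m : ℕ}
    (hl : Function.Injective fun i => (l i : ZMod m)) {p : R[X]}
    (hp : p ∈ span R (Set.range fun i => (X : R[X]) ^ l i)) (hdvd : X ^ m - 1 ∣ p) : p = 0 := by
  obtain ⟨c, rfl⟩ := mem_span_range_iff_exists_fun R |>.1 hp
  let ev := aeval (R := R) (AddMonoidAlgebra.of' R (ZMod m) 1)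
  have hX (j : ℕ) : ev (X ^ j) = AddMonoidAlgebra.single (j : ZMod m) 1 := by
    simp [ev, AddMonoidAlgebra.of'_apply, AddMonoidAlgebra.single_pow]
  have hker : ev (∑ i, c i • X ^ l i) = 0 := by
    obtain ⟨w, hw⟩ := hdvd
    rw [hw, map_mul, map_sub, hX, ZMod.natCast_self, ← AddMonoidAlgebra.one_def, map_one,
      sub_self, zero_mul]
  simp only [map_sum, map_smul, hX] at hker
  have hind := (AddMonoidAlgebra.basis (ZMod m) R).linearIndependent.comp _ hl
  have hc := Fintype.linearIndependent_iff.1 hind c (by simpa using hker)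
  simp [hc]

lemma sum_totient_le_natDegree_of_cyclotomic_dvd {h : ℚ[X]} (hh : h ≠ 0) {S : Finset ℕ}
    (hS : ∀ q ∈ S, cyclotomic q ℚ ∣ h) : ∑ q ∈ S, φ q ≤ h.natDegree := by
  have hprod : ∏ q ∈ S, cyclotomic q ℚ ∣ h :=
    prod_dvd_of_coprime (fun _ _ _ _ hne => cyclotomic.isCoprime_rat hne) hS
  calc ∑ q ∈ S, φ q = (∏ q ∈ S, cyclotomic q ℚ).natDegree := by
        rw [natDegree_prod _ _ fun q _ => cyclotomic_ne_zero q ℚ]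
        simp only [natDegree_cyclotomic]
    _ ≤ h.natDegree := natDegree_le_of_dvd hprod hh

lemma cyclotomic_dvd_map_of_X_pow_sub_one_dvd {q d : ℕ} (hqd : q ∣ d) {h : ℤ[X]}
    (hdvd : X ^ d - 1 ∣ h) : cyclotomic q ℚ ∣ h.map (Int.castRingHom ℚ) := by
  refine (cyclotomic.dvd_X_pow_sub_one q ℚ).trans ((dvd_pow_sub_one_of_dvd hqd).trans ?_)
  simpa using Polynomial.map_dvd (Int.castRingHom ℚ) hdvd

lemma mem_span_X_pow_of_forall_mem_sup [Fintype ι] {m n : ℕ}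
    (hl : Function.Injective fun i => (l i : ZMod m)) (hln : ∀ i, l i ≤ n) {f : ℤ[X]}
    (hf : f.natDegree ≤ n) {S : Finset ℕ} (hS : n < ∑ q ∈ S, φ q)
    (hmem : ∀ q ∈ S, f ∈ span ℤ (Set.range fun i => (X : ℤ[X]) ^ l i) ⊔
      (Ideal.span {(X : ℤ[X]) ^ Nat.lcm q m - 1}).restrictScalars ℤ) :
    f ∈ span ℤ (Set.range fun i => (X : ℤ[X]) ^ l i) := by
  set M := span ℤ (Set.range fun i => (X : ℤ[X]) ^ l i)
  simp only [mem_sup_restrictScalars_span_singleton_iff] at hmem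
  obtain ⟨q₀, hq₀⟩ := nonempty_of_sum_ne_zero (by omega : ∑ q ∈ S, φ q ≠ 0)
  obtain ⟨g, hgM, hg⟩ := hmem q₀ hq₀
  have hdvd : ∀ q ∈ S, X ^ Nat.lcm q m - 1 ∣ f - g := fun q hq => by
    obtain ⟨g', hg'M, hg'⟩ := hmem q hq
    have hm {r : ℕ} {p : ℤ[X]} (h : X ^ Nat.lcm r m - 1 ∣ p) : X ^ m - 1 ∣ p :=
      (dvd_pow_sub_one_of_dvd (Nat.dvd_lcm_right r m)).trans h
    have : g' - g = 0 := eq_zero_of_mem_span_X_pow_of_dvd hl (M.sub_mem hg'M hgM) <| by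
      simpa using dvd_sub (hm hg) (hm hg')
    rwa [← sub_eq_zero.1 this]
  by_contra hfM
  have hne : (f - g).map (Int.castRingHom ℚ) ≠ 0 :=
    (Polynomial.map_ne_zero_iff (RingHom.injective_int _)).2 (sub_ne_zero.2 fun h => hfM (h ▸ hgM))
  have := sum_totient_le_natDegree_of_cyclotomic_dvd hne fun q hq =>
    cyclotomic_dvd_map_of_X_pow_sub_one_dvd (Nat.dvd_lcm_left q m) (hdvd q hq)
  have := (natDegree_map_le (f := Int.castRingHom ℚ) (p := f - g)).trans (natDegree_sub_le f g)
    |>.trans (max_le hf (natDegree_le_of_mem_span_X_pow hln hgM))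
  omega

end Polynomials

lemma Int.injective_natCast_zmod_natAbs {ι : Type*} {l : ι → ℕ} {m : ℤ}
    (h : ∀ i j, i ≠ j → ¬ (l i : ℤ) ≡ (l j : ℤ) [ZMOD m]) :
    Function.Injective fun i => (l i : ZMod m.natAbs) := fun i j hij => by
  by_contra hne
  refine h i j hne (Int.modEq_natAbs.1 ((ZMod.intCast_eq_intCast_iff _ _ _).1 ?_))
  exact_mod_cast hij

/-- Fix `ε > 0`. There is a constant `c > 0` such that for any `n > 0`,
exponents `0 ≤ l₁ < ⋯ < l_k ≤ n` pairwise distinct mod `m₀`, and `f ∈ ℤ[X]` of degree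
`≤ n` not in `M = ℤX^{l₁} + ⋯ + ℤX^{l_k}`, there is an odd prime `q < c·n^{1/2+ε}`
with `f ∉ M + ⟨X^{lcm(q,m₀)} - 1⟩`. -/
theorem stmt_18 (ε : ℝ) (hε : 0 < ε) :
    ∃ c : ℝ, 0 < c ∧ ∀ n : ℕ, 0 < n → ∀ (k : ℕ) (l : Fin k → ℕ),
      StrictMono l → (∀ i, l i ≤ n) → ∀ m₀ : ℤ,
      (∀ i j, i ≠ j → ¬ ((l i : ℤ) ≡ (l j : ℤ) [ZMOD m₀])) →
      ∀ f : Polynomial ℤ, f.natDegree ≤ n →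
      f ∉ Submodule.span ℤ (Set.range fun i => (Polynomial.X : Polynomial ℤ) ^ (l i)) →
      ∃ q : ℕ, q.Prime ∧ Odd q ∧ (q : ℝ) < c * (n : ℝ) ^ ((1 : ℝ) / 2 + ε) ∧
        f ∉ Submodule.span ℤ (Set.range fun i => (Polynomial.X : Polynomial ℤ) ^ (l i)) ⊔
          (Ideal.span {(Polynomial.X : Polynomial ℤ) ^ (Int.lcm (q : ℤ) m₀) - 1}).restrictScalars ℤ := by
  obtain ⟨c, hc, hsum⟩ := exists_lt_sum_totient_oddPrimesLE (by linarith : (1 : ℝ) / 2 < 1 / 2 + ε)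
  refine ⟨2 * c, by positivity, fun n hn k l _ hln m₀ hl f hf hfM => ?_⟩
  by_contra! hall
  refine hfM (mem_span_X_pow_of_forall_mem_sup (Int.injective_natCast_zmod_natAbs hl) hln hf
    (hsum n hn) fun q hq => ?_)
  obtain ⟨hq2, hqx, hq⟩ := mem_oddPrimesLE.1 hq
  have hpos : 0 < c * (n : ℝ) ^ ((1 : ℝ) / 2 + ε) := by positivity
  have hqc : (q : ℝ) < 2 * c * (n : ℝ) ^ ((1 : ℝ) / 2 + ε) := by
    have := (Nat.le_floor_iff hpos.le).1 hqx
    linarith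
  simpa [Int.lcm] using hall q hq (hq.odd_of_ne_two hq2) hqc
end
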